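/- arXiv:1303.1763 — 2 statements merged into one kernel-verified Lean document; each statement's English description precedes it below -/
import Mathlib

section
/- Let A be a finite alphabet, L ⊆ A⁺, and let S, T be semigroups with surjections φ: A⁺ → S and ψ: A⁺ → T (both semigroup homomorphisms from the free semigroup A⁺) such that φ and ψ restricted to A are injective, Lφ = S, Lψ = T, and for all u,v,w ∈ L: (uφ)(vφ) = wφ ⟺ (uψ)(vψ) = wψ. Suppose also that every element of S represented by a word in L of length ≥ 2 is decomposable in S (a product of two elements of S), and similarly for T. Then there is a semigroup isomorphism τ: S → T such that wφτ = wψ for all w ∈ L. -/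
open FreeSemigroup

/-- If an element's image is indecomposable or via the table, equal φ-images in L give equal ψ-images. -/
lemma wordhyp_aux
    {A : Type*} {S T : Type*} [Semigroup S] [Semigroup T]
    (φ : FreeSemigroup A →ₙ* S) (ψ : FreeSemigroup A →ₙ* T)
    (hφinj : Function.Injective fun a : A => φ (FreeSemigroup.of a))
    (L : Set (FreeSemigroup A))
    (hLφ : φ '' L = Set.univ)
    (htable : ∀ u ∈ L, ∀ v ∈ L, ∀ w ∈ L, (φ u * φ v = φ w → ψ u * ψ v = ψ w)) :
    ∀ u ∈ L, ∀ v ∈ L, φ u = φ v → ψ u = ψ v := by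
  intro u hu v hv huv
  by_cases hdec : ∃ s₁ s₂ : S, φ u = s₁ * s₂
  · obtain ⟨s₁, s₂, hs⟩ := hdec
    have h1 : s₁ ∈ φ '' L := by rw [hLφ]; trivial
    have h2 : s₂ ∈ φ '' L := by rw [hLφ]; trivial
    obtain ⟨p, hp, hpe⟩ := h1
    obtain ⟨q, hq, hqe⟩ := h2
    have e1 : ψ p * ψ q = ψ u := htable p hp q hq u hu (by rw [hpe, hqe, hs])
    have e2 : ψ p * ψ q = ψ v := htable p hp q hq v hv (by rw [hpe, hqe, ← hs, huv])
    rw [← e1, e2]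
  · -- φ u is indecomposable; then u and v must be single letters
    have hsingle : ∀ w : FreeSemigroup A, φ w = φ u → w = FreeSemigroup.of w.head := by
      intro w hw
      rcases w with ⟨h, t⟩
      cases t with
      | nil => rfl
      | cons a rest =>
        exfalso
        apply hdec
        refine ⟨φ (FreeSemigroup.of h), φ (FreeSemigroup.mk a rest), ?_⟩
        rw [← hw, ← map_mul]
        rfl
    have hu1 := hsingle u rfl
    have hv1 := hsingle v huv.symm
    have : u.head = v.head := by
      apply hφinj
      simp only
      rw [← hu1, ← hv1, huv]
    rw [hu1, hv1, this]

theorem wordhyp_structure_determines_unique_semigroup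
    {A : Type*} [Fintype A] {S T : Type*} [Semigroup S] [Semigroup T]
    (φ : FreeSemigroup A →ₙ* S) (ψ : FreeSemigroup A →ₙ* T)
    (hφsurj : Function.Surjective φ) (hψsurj : Function.Surjective ψ)
    (hφinj : Function.Injective fun a : A => φ (FreeSemigroup.of a))
    (hψinj : Function.Injective fun a : A => ψ (FreeSemigroup.of a))
    (L : Set (FreeSemigroup A))
    (hLφ : φ '' L = Set.univ) (hLψ : ψ '' L = Set.univ)
    (htable : ∀ u ∈ L, ∀ v ∈ L, ∀ w ∈ L, (φ u * φ v = φ w ↔ ψ u * ψ v = ψ w))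
    (hdecS : ∀ w ∈ L, 2 ≤ w.length → ∃ s₁ s₂ : S, φ w = s₁ * s₂)
    (hdecT : ∀ w ∈ L, 2 ≤ w.length → ∃ t₁ t₂ : T, ψ w = t₁ * t₂) :
    ∃ τ : S ≃* T, ∀ w ∈ L, τ (φ w) = ψ w := by
  classical
  have key1 : ∀ u ∈ L, ∀ v ∈ L, φ u = φ v → ψ u = ψ v :=
    wordhyp_aux φ ψ hφinj L hLφ (fun u hu v hv w hw => (htable u hu v hv w hw).mp)
  have key2 : ∀ u ∈ L, ∀ v ∈ L, ψ u = ψ v → φ u = φ v :=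
    wordhyp_aux ψ φ hψinj L hLψ (fun u hu v hv w hw => (htable u hu v hv w hw).mpr)
  have hex : ∀ s : S, ∃ w, w ∈ L ∧ φ w = s := by
    intro s
    have : s ∈ φ '' L := by rw [hLφ]; trivial
    obtain ⟨w, hw, he⟩ := this
    exact ⟨w, hw, he⟩
  have hexT : ∀ t : T, ∃ w, w ∈ L ∧ ψ w = t := by
    intro t
    have : t ∈ ψ '' L := by rw [hLψ]; trivial
    obtain ⟨w, hw, he⟩ := this
    exact ⟨w, hw, he⟩
  choose wS hwS hwSe using hex
  choose wT hwT hwTe using hexT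
  set f : S → T := fun s => ψ (wS s) with hf
  set g : T → S := fun t => φ (wT t) with hg
  have hfw : ∀ w ∈ L, f (φ w) = ψ w := by
    intro w hw
    exact key1 (wS (φ w)) (hwS _) w hw (hwSe _)
  have hgw : ∀ w ∈ L, g (ψ w) = φ w := by
    intro w hw
    exact key2 (wT (ψ w)) (hwT _) w hw (hwTe _)
  have hgf : ∀ s, g (f s) = s := by
    intro s
    rw [hf]
    simp only
    rw [hgw (wS s) (hwS s), hwSe]
  have hfg : ∀ t, f (g t) = t := by
    intro t
    rw [hg]
    simp only
    rw [hfw (wT t) (hwT t), hwTe]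
  have hmul : ∀ s₁ s₂ : S, f (s₁ * s₂) = f s₁ * f s₂ := by
    intro s₁ s₂
    have h1 : φ (wS s₁) * φ (wS s₂) = φ (wS (s₁ * s₂)) := by
      rw [hwSe, hwSe, hwSe]
    have := (htable (wS s₁) (hwS _) (wS s₂) (hwS _) (wS (s₁ * s₂)) (hwS _)).mp h1
    rw [hf]
    simp only
    rw [← this]
  exact ⟨{ toFun := f, invFun := g, left_inv := hgf, right_inv := hfg, map_mul' := hmul },
    hfw⟩
end

section
/- Let S be a semigroup that is a disjoint union of nonempty subsets T_α indexed by elements α of a finite meet-semilattice Y, with T_α T_β ⊆ T_{α∧β} for all α,β ∈ Y. Suppose each T_α contains an element e_α which is a two-sided identity for T_α, that e_α e_β = e_{α∧β} for all α, β, and that every e_α commutes with every element of S, and that each T_α is a subgroup of S. Then S is a regular semigroup in which every idempotent is central, i.e., S is a Clifford semigroup. -/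
theorem semilattice_of_groups_is_clifford
    {S : Type*} [Semigroup S]
    {Y : Type*} [SemilatticeInf Y] [Fintype Y]
    (T : Y → Set S)
    (hne : ∀ α, (T α).Nonempty)
    (hcover : (⋃ α, T α) = Set.univ)
    (hdisj : ∀ α β, α ≠ β → Disjoint (T α) (T β))
    (hmul : ∀ α β, ∀ x ∈ T α, ∀ y ∈ T β, x * y ∈ T (α ⊓ β))
    (e : Y → S) (heT : ∀ α, e α ∈ T α)
    (hid : ∀ α, ∀ x ∈ T α, e α * x = x ∧ x * e α = x)
    (hsemi : ∀ α β, e α * e β = e (α ⊓ β))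
    (hcentral : ∀ α, ∀ s : S, e α * s = s * e α)
    (hinv : ∀ α, ∀ x ∈ T α, ∃ y ∈ T α, x * y = e α ∧ y * x = e α) :
    -- S is regular
    (∀ s : S, ∃ x : S, s * x * s = s) ∧
    -- and every idempotent of S is central
    (∀ f : S, f * f = f → ∀ s : S, f * s = s * f) := by
  have hmem : ∀ s : S, ∃ α, s ∈ T α := by
    intro s
    have : s ∈ ⋃ α, T α := hcover ▸ Set.mem_univ s
    simpa using this
  constructor
  · intro s
    obtain ⟨α, hs⟩ := hmem s
    obtain ⟨y, hy, hxy, hyx⟩ := hinv α s hs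
    refine ⟨y, ?_⟩
    rw [hxy, (hid α s hs).1]
  · intro f hf s
    obtain ⟨α, hfT⟩ := hmem f
    obtain ⟨y, hy, hxy, hyx⟩ := hinv α f hfT
    have : f = e α := by
      calc f = f * e α := ((hid α f hfT).2).symm
        _ = f * (f * y) := by rw [hxy]
        _ = f * f * y := (mul_assoc _ _ _).symm
        _ = f * y := by rw [hf]
        _ = e α := hxy
    rw [this]
    exact hcentral α s
end
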